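/- Let Γ be a countable group, μ a finitely supported generating probability measure on Γ, and ν a μ-stationary probability measure for a measurable Γ-action on a standard probability space (X, 𝔪). Let A_1 ⊆ A_2 ⊆ ⋯ be an increasing sequence of Γ-invariant sub-σ-algebras of 𝔪 and let A_∞ = σ(⋃_{i} A_i) be the σ-algebra they generate. Then the Furstenberg entropies satisfy h_μ(A_∞) = lim_{i→∞} h_μ(A_i) = sup_i h_μ(A_i). -/

import Mathlib

/-!
Fix `g` in the finite support of `μ`. Iterating stationarity, `ν = ∑ₕ μ^{*n}{h} • h_*ν`, and the
generating hypothesis give `c • ν ≤ g_*ν ≤ C • ν` with `0 < c` and `C < ∞`, so the density `ρ` of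
`(g⁻¹)_*ν` with respect to `ν` takes values in a compact subinterval of `(0, ∞)`. On a
sub-σ-algebra `B` the density of the restricted measures is `𝔼[ρ | B]`. Conditional Jensen for the
concave `log` makes `-∫ log 𝔼[ρ | B] dν` monotone in `B`, and Lévy's upward theorem together with
dominated convergence gives its convergence along `A i`. A monotone convergent sequence converges
to its supremum.
-/

open MeasureTheory Filter Topology

/-- Convolution powers of a probability measure on a discrete group:
`convPow μ 0 = δ_e` and `convPow μ (n+1) {g} = ∑_h μ {h} * convPow μ n {h⁻¹ g}`. -/
noncomputable def convPow {Γ : Type*} [Group Γ] [MeasurableSpace Γ]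
    (μ : Measure Γ) : ℕ → Measure Γ
  | 0 => Measure.dirac 1
  | n + 1 => (μ.prod (convPow μ n)).map (fun p => p.1 * p.2)

/-- The Furstenberg entropy of the stationary measure `ν` relative to a (`Γ`-invariant)
sub-σ-algebra `A` of the ambient σ-algebra `mX`:
`h_μ(A) = ∑_{g∈Γ} μ({g}) ∫_X −log( d(((g⁻¹)_*ν)|_A)/d(ν|_A)(x) ) dν(x)`. -/
noncomputable def furstenbergEntropy {Γ X : Type*} [Group Γ] [MeasurableSpace Γ]
    [SMul Γ X] (A : MeasurableSpace X) {mX : MeasurableSpace X} (hA : A ≤ mX)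
    (μ : Measure Γ) (ν : Measure X) : ℝ :=
  ∑' g : Γ, (μ {g}).toReal *
    ∫ x, -Real.log
        ((@Measure.rnDeriv X A ((ν.map fun y => g⁻¹ • y).trim hA) (ν.trim hA) x).toReal) ∂ν

open Set
open scoped ENNReal

section LogIntegral
variable {X : Type*} {m m0 : MeasurableSpace X} {μ : Measure X} {a b : ℝ}

lemma abs_log_le_of_mem_Icc (ha : 0 < a) {y : ℝ} (hy : y ∈ Icc a b) :
    |Real.log y| ≤ max |Real.log a| |Real.log b| :=
  abs_le_max_abs_abs (Real.log_le_log ha hy.1) (Real.log_le_log (ha.trans_le hy.1) hy.2)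

lemma integrable_log_of_ae_mem_Icc [IsFiniteMeasure μ] (ha : 0 < a) {f : X → ℝ}
    (hf : AEMeasurable f μ) (hmem : ∀ᵐ x ∂μ, f x ∈ Icc a b) :
    Integrable (fun x => Real.log (f x)) μ :=
  .of_bound (Real.measurable_log.comp_aemeasurable hf).aestronglyMeasurable _
    (hmem.mono fun _ hx => abs_log_le_of_mem_Icc ha hx)

lemma tendsto_integral_log_of_ae_tendsto [IsFiniteMeasure μ] (ha : 0 < a)
    {f : ℕ → X → ℝ} {g : X → ℝ} (hf : ∀ n, AEMeasurable (f n) μ)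
    (hmem : ∀ n, ∀ᵐ x ∂μ, f n x ∈ Icc a b)
    (hlim : ∀ᵐ x ∂μ, Tendsto (fun n => f n x) atTop (𝓝 (g x))) :
    Tendsto (fun n => ∫ x, Real.log (f n x) ∂μ) atTop (𝓝 (∫ x, Real.log (g x) ∂μ)) := by
  refine tendsto_integral_of_dominated_convergence (fun _ => max |Real.log a| |Real.log b|)
    (fun n => (Real.measurable_log.comp_aemeasurable (hf n)).aestronglyMeasurable)
    (integrable_const _) (fun n => (hmem n).mono fun _ hx => abs_log_le_of_mem_Icc ha hx) ?_
  filter_upwards [hlim, ae_all_iff.2 hmem] with x hx hxmem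
  have hgx : g x ∈ Icc a b := isClosed_Icc.mem_of_tendsto hx (Eventually.of_forall hxmem)
  exact ((Real.continuousAt_log (ha.trans_le hgx.1).ne').tendsto.comp hx)

lemma integral_log_le_integral_log_condExp [IsFiniteMeasure μ] (hm : m ≤ m0) (ha : 0 < a)
    {f : X → ℝ} (hf : Integrable f μ) (hmem : ∀ᵐ x ∂μ, f x ∈ Icc a b) :
    ∫ x, Real.log (f x) ∂μ ≤ ∫ x, Real.log (μ[f | m] x) ∂μ := by
  have hIcc : Icc a b ⊆ Ioi 0 := fun _ hy => ha.trans_le hy.1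
  have hjensen : μ[Real.log ∘ f | m] ≤ᵐ[μ] Real.log ∘ μ[f | m] :=
    (strictConcaveOn_log_Ioi.concaveOn.subset hIcc (convex_Icc a b)).condExp_map_le hm
      (Real.continuousOn_log.mono fun _ hy => (hIcc hy).ne').upperSemicontinuousOn hmem
      isClosed_Icc hf (integrable_log_of_ae_mem_Icc ha hf.aemeasurable hmem)
  calc ∫ x, Real.log (f x) ∂μ = ∫ x, μ[Real.log ∘ f | m] x ∂μ := (integral_condExp hm).symm
    _ ≤ ∫ x, Real.log (μ[f | m] x) ∂μ :=
      integral_mono_ae integrable_condExp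
        (integrable_log_of_ae_mem_Icc ha (stronglyMeasurable_condExp.mono hm).aemeasurable
          ((convex_Icc a b).condExp_mem hm hf isClosed_Icc hmem)) hjensen

end LogIntegral

section RadonNikodym
variable {X : Type*} {m0 : MeasurableSpace X} {κ ν : Measure X}

lemma ae_toReal_rnDeriv_mem_Icc [SigmaFinite κ] [SigmaFinite ν] {c₁ c₂ : ℝ≥0∞}
    (h₁ : c₁ • ν ≤ κ) (h₂ : κ ≤ c₂ • ν) (hc₂ : c₂ ≠ ∞) :
    ∀ᵐ x ∂ν, (κ.rnDeriv ν x).toReal ∈ Icc c₁.toReal c₂.toReal := by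
  have hset : ∀ s, ∫⁻ x in s, κ.rnDeriv ν x ∂ν = κ s :=
    Measure.setLIntegral_rnDeriv (Measure.absolutelyContinuous_of_le_smul h₂)
  have hlower : (fun _ => c₁) ≤ᵐ[ν] κ.rnDeriv ν :=
    ae_le_of_forall_setLIntegral_le_of_sigmaFinite measurable_const fun s _ _ => by
      simpa [hset, mul_comm] using h₁ s
  have hupper : κ.rnDeriv ν ≤ᵐ[ν] fun _ => c₂ :=
    ae_le_of_forall_setLIntegral_le_of_sigmaFinite (Measure.measurable_rnDeriv κ ν)
      fun s _ _ => by simpa [hset, mul_comm] using h₂ s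
  filter_upwards [hlower, hupper] with x hx₁ hx₂
  exact ⟨ENNReal.toReal_mono (ne_top_of_le_ne_top hc₂ hx₂) hx₁, ENNReal.toReal_mono hc₂ hx₂⟩

variable [IsFiniteMeasure κ] [IsFiniteMeasure ν] {a b : ℝ}

lemma integral_neg_log_toReal_rnDeriv_trim (hκν : κ ≪ ν) {B : MeasurableSpace X} (hB : B ≤ m0) :
    ∫ x, -Real.log ((κ.trim hB).rnDeriv (ν.trim hB) x).toReal ∂ν
      = -∫ x, Real.log (ν[fun x => (κ.rnDeriv ν x).toReal | B] x) ∂ν := by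
  rw [integral_neg]
  exact congrArg _ (integral_congr_ae
    ((ae_eq_of_ae_eq_trim (toReal_rnDeriv_trim hB hκν)).fun_comp Real.log))

theorem integral_neg_log_toReal_rnDeriv_trim_mono (hκν : κ ≪ ν) (ha : 0 < a)
    (hρ : ∀ᵐ x ∂ν, (κ.rnDeriv ν x).toReal ∈ Icc a b) {B₁ B₂ : MeasurableSpace X}
    (hB₁ : B₁ ≤ m0) (hB₂ : B₂ ≤ m0) (h₁₂ : B₁ ≤ B₂) :
    ∫ x, -Real.log ((κ.trim hB₁).rnDeriv (ν.trim hB₁) x).toReal ∂ν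
      ≤ ∫ x, -Real.log ((κ.trim hB₂).rnDeriv (ν.trim hB₂) x).toReal ∂ν := by
  rw [integral_neg_log_toReal_rnDeriv_trim hκν, integral_neg_log_toReal_rnDeriv_trim hκν,
    neg_le_neg_iff]
  exact (integral_log_le_integral_log_condExp hB₁ ha integrable_condExp
    ((convex_Icc a b).condExp_mem hB₂ Measure.integrable_toReal_rnDeriv isClosed_Icc hρ)).trans_eq
    (integral_congr_ae ((condExp_condExp_of_le h₁₂ hB₂).fun_comp Real.log))

theorem tendsto_integral_neg_log_toReal_rnDeriv_trim (hκν : κ ≪ ν) (ha : 0 < a)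
    (hρ : ∀ᵐ x ∂ν, (κ.rnDeriv ν x).toReal ∈ Icc a b) (A : ℕ → MeasurableSpace X)
    (hA : Monotone A) (hAm : ∀ i, A i ≤ m0) :
    Tendsto (fun i => ∫ x, -Real.log ((κ.trim (hAm i)).rnDeriv (ν.trim (hAm i)) x).toReal ∂ν)
      atTop (𝓝 (∫ x, -Real.log
        ((κ.trim (iSup_le hAm)).rnDeriv (ν.trim (iSup_le hAm)) x).toReal ∂ν)) := by
  let ℱ : Filtration ℕ m0 := ⟨A, hA, hAm⟩
  simp_rw [integral_neg_log_toReal_rnDeriv_trim hκν]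
  refine (tendsto_integral_log_of_ae_tendsto ha
    (fun i => (stronglyMeasurable_condExp.mono (hAm i)).aemeasurable)
    (fun i => (convex_Icc a b).condExp_mem (hAm i) Measure.integrable_toReal_rnDeriv
      isClosed_Icc hρ) (tendsto_ae_condExp (ℱ := ℱ) _)).neg

end RadonNikodym

section Stationary
variable {Γ : Type*} [Group Γ] [Countable Γ] [MeasurableSpace Γ] [MeasurableSingletonClass Γ]

lemma isProbabilityMeasure_convPow (μ : Measure Γ) [IsProbabilityMeasure μ] :
    ∀ n, IsProbabilityMeasure (convPow μ n)
  | 0 => by rw [convPow]; infer_instance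
  | n + 1 => by
    have := isProbabilityMeasure_convPow μ n
    rw [convPow]
    exact Measure.isProbabilityMeasure_map (measurable_of_countable _).aemeasurable

lemma convPow_succ_apply_singleton (μ : Measure Γ) [IsProbabilityMeasure μ] (n : ℕ) (g : Γ) :
    convPow μ (n + 1) {g} = ∑' h, μ {h} * convPow μ n {h⁻¹ * g} := by
  have := isProbabilityMeasure_convPow μ n
  have hpre (h : Γ) : Prod.mk h ⁻¹' ((fun p : Γ × Γ => p.1 * p.2) ⁻¹' {g}) = {h⁻¹ * g} := by
    ext; simp [eq_inv_mul_iff_mul_eq]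
  rw [convPow, Measure.map_apply (measurable_of_countable _) (measurableSet_singleton g),
    Measure.prod_apply (measurable_of_countable _ (measurableSet_singleton g))]
  simp_rw [hpre, lintegral_countable', mul_comm]

variable {X : Type*} [mX : MeasurableSpace X] [MulAction Γ X] {μ : Measure Γ}
  [IsProbabilityMeasure μ] {ν : Measure X}

lemma tsum_convPow_mul_measure_preimage_smul (hmeas : ∀ g : Γ, Measurable fun x : X => g • x)
    (hstat : Measure.sum (fun g : Γ => μ {g} • ν.map (fun x => g • x)) = ν) (n : ℕ)
    {s : Set X} (hs : MeasurableSet s) :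
    ∑' g, convPow μ n {g} * ν ((fun x => g • x) ⁻¹' s) = ν s := by
  have hstat' {t : Set X} (ht : MeasurableSet t) :
      ∑' h, μ {h} * ν ((fun x => h • x) ⁻¹' t) = ν t := by
    conv_rhs => rw [← hstat, Measure.sum_apply _ ht]
    simp_rw [Measure.smul_apply, Measure.map_apply (hmeas _) ht, smul_eq_mul]
  induction n generalizing s with
  | zero =>
    rw [tsum_eq_single 1 fun g hg => by simp [convPow, Ne.symm hg]]
    simp [convPow]
  | succ n ih =>
    calc ∑' g, convPow μ (n + 1) {g} * ν ((fun x => g • x) ⁻¹' s)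
        = ∑' h, ∑' g, μ {h} * convPow μ n {h⁻¹ * g} * ν ((fun x => g • x) ⁻¹' s) := by
          simp_rw [convPow_succ_apply_singleton, ← ENNReal.tsum_mul_right]
          exact ENNReal.tsum_comm
      _ = ∑' h, μ {h} * ∑' g, convPow μ n {g} *
            ν ((fun x => g • x) ⁻¹' ((fun x => h • x) ⁻¹' s)) := by
          refine tsum_congr fun h => ?_
          rw [← ENNReal.tsum_mul_left, ← (Equiv.mulLeft h).tsum_eq]
          simp [mul_assoc, preimage_preimage, mul_smul]
      _ = ν s := by simp_rw [ih ((hmeas _) hs), hstat' hs]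

lemma exists_smul_map_smul_le (hmeas : ∀ g : Γ, Measurable fun x : X => g • x)
    (hgen : ∀ g : Γ, ∃ n, convPow μ n {g} ≠ 0)
    (hstat : Measure.sum (fun g : Γ => μ {g} • ν.map (fun x => g • x)) = ν) (g : Γ) :
    ∃ c : ℝ≥0∞, c ≠ 0 ∧ c ≠ ∞ ∧ c • ν.map (fun x => g • x) ≤ ν := by
  obtain ⟨n, hn⟩ := hgen g
  have := isProbabilityMeasure_convPow μ n
  refine ⟨_, hn, measure_ne_top _ _, Measure.le_iff.2 fun s hs => ?_⟩
  rw [Measure.smul_apply, Measure.map_apply (hmeas g) hs, smul_eq_mul,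
    ← tsum_convPow_mul_measure_preimage_smul hmeas hstat n hs]
  exact ENNReal.le_tsum (f := fun g => convPow μ n {g} * ν ((fun x => g • x) ⁻¹' s)) g

lemma exists_smul_le_map_smul (hmeas : ∀ g : Γ, Measurable fun x : X => g • x)
    (hgen : ∀ g : Γ, ∃ n, convPow μ n {g} ≠ 0)
    (hstat : Measure.sum (fun g : Γ => μ {g} • ν.map (fun x => g • x)) = ν) (g : Γ) :
    ∃ c : ℝ≥0∞, c ≠ 0 ∧ c ≠ ∞ ∧ c • ν ≤ ν.map (fun x => g • x) := by
  obtain ⟨c, hc0, hct, hc⟩ := exists_smul_map_smul_le hmeas hgen hstat g⁻¹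
  have hid : (fun x : X => g • x) ∘ (fun x => g⁻¹ • x) = id := funext (smul_inv_smul g)
  have := Measure.map_mono hc (hmeas g)
  rw [Measure.map_smul, Measure.map_map (hmeas g) (hmeas g⁻¹), hid, Measure.map_id] at this
  exact ⟨c, hc0, hct, this⟩

lemma exists_map_smul_le_smul (hmeas : ∀ g : Γ, Measurable fun x : X => g • x)
    (hgen : ∀ g : Γ, ∃ n, convPow μ n {g} ≠ 0)
    (hstat : Measure.sum (fun g : Γ => μ {g} • ν.map (fun x => g • x)) = ν) (g : Γ) :
    ∃ C : ℝ≥0∞, C ≠ ∞ ∧ ν.map (fun x => g • x) ≤ C • ν := by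
  obtain ⟨c, hc0, hct, hc⟩ := exists_smul_map_smul_le hmeas hgen hstat g
  refine ⟨c⁻¹, ENNReal.inv_ne_top.2 hc0, ?_⟩
  calc ν.map (fun x => g • x) = c⁻¹ • c • ν.map (fun x => g • x) := by
        rw [smul_smul, ENNReal.inv_mul_cancel hc0 hct, one_smul]
    _ ≤ c⁻¹ • ν := _root_.smul_le_smul_left _ hc

lemma map_smul_absolutelyContinuous (hmeas : ∀ g : Γ, Measurable fun x : X => g • x)
    (hgen : ∀ g : Γ, ∃ n, convPow μ n {g} ≠ 0)
    (hstat : Measure.sum (fun g : Γ => μ {g} • ν.map (fun x => g • x)) = ν) (g : Γ) :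
    ν.map (fun x => g • x) ≪ ν :=
  let ⟨_, _, h⟩ := exists_map_smul_le_smul hmeas hgen hstat g
  Measure.absolutelyContinuous_of_le_smul h

lemma exists_toReal_rnDeriv_map_smul_mem_Icc [IsFiniteMeasure ν]
    (hmeas : ∀ g : Γ, Measurable fun x : X => g • x)
    (hgen : ∀ g : Γ, ∃ n, convPow μ n {g} ≠ 0)
    (hstat : Measure.sum (fun g : Γ => μ {g} • ν.map (fun x => g • x)) = ν) (g : Γ) :
    ∃ a b : ℝ, 0 < a ∧ ∀ᵐ x ∂ν, ((ν.map fun x => g • x).rnDeriv ν x).toReal ∈ Icc a b := by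
  obtain ⟨c₁, hc₁0, hc₁t, h₁⟩ := exists_smul_le_map_smul hmeas hgen hstat g
  obtain ⟨c₂, hc₂t, h₂⟩ := exists_map_smul_le_smul hmeas hgen hstat g
  exact ⟨_, _, ENNReal.toReal_pos hc₁0 hc₁t, ae_toReal_rnDeriv_mem_Icc h₁ h₂ hc₂t⟩

end Stationary

lemma furstenbergEntropy_eq_sum {Γ X : Type*} [Group Γ] [MeasurableSpace Γ] [SMul Γ X]
    (B : MeasurableSpace X) {mX : MeasurableSpace X} (hB : B ≤ mX) {μ : Measure Γ}
    (hfin : {g : Γ | μ {g} ≠ 0}.Finite) (ν : Measure X) :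
    furstenbergEntropy B hB μ ν = ∑ g ∈ hfin.toFinset, (μ {g}).toReal *
      ∫ x, -Real.log (((ν.map fun y => g⁻¹ • y).trim hB).rnDeriv (ν.trim hB) x).toReal ∂ν :=
  tsum_eq_sum (s := hfin.toFinset) fun g hg => by simp [show μ {g} = 0 by simpa using hg]

section FurstenbergEntropy
variable {Γ : Type*} [Group Γ] [Countable Γ] [MeasurableSpace Γ] [MeasurableSingletonClass Γ]
  {X : Type*} [mX : MeasurableSpace X] [MulAction Γ X] {μ : Measure Γ} [IsProbabilityMeasure μ]
  {ν : Measure X} [IsFiniteMeasure ν]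

theorem furstenbergEntropy_mono (hmeas : ∀ g : Γ, Measurable fun x : X => g • x)
    (hfin : {g : Γ | μ {g} ≠ 0}.Finite) (hgen : ∀ g : Γ, ∃ n, convPow μ n {g} ≠ 0)
    (hstat : Measure.sum (fun g : Γ => μ {g} • ν.map (fun x => g • x)) = ν)
    {B₁ B₂ : MeasurableSpace X} (hB₁ : B₁ ≤ mX) (hB₂ : B₂ ≤ mX) (h₁₂ : B₁ ≤ B₂) :
    furstenbergEntropy B₁ hB₁ μ ν ≤ furstenbergEntropy B₂ hB₂ μ ν := by
  rw [furstenbergEntropy_eq_sum _ _ hfin, furstenbergEntropy_eq_sum _ _ hfin]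
  refine Finset.sum_le_sum fun g _ => mul_le_mul_of_nonneg_left ?_ ENNReal.toReal_nonneg
  -- `B₁` and `B₂` are local instances, so the ambient σ-algebra has to be named.
  obtain ⟨a, b, ha, hρ⟩ := exists_toReal_rnDeriv_map_smul_mem_Icc (mX := mX) hmeas hgen hstat g⁻¹
  exact integral_neg_log_toReal_rnDeriv_trim_mono
    (map_smul_absolutelyContinuous (mX := mX) hmeas hgen hstat g⁻¹) ha hρ hB₁ hB₂ h₁₂

theorem tendsto_furstenbergEntropy_iSup (hmeas : ∀ g : Γ, Measurable fun x : X => g • x)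
    (hfin : {g : Γ | μ {g} ≠ 0}.Finite) (hgen : ∀ g : Γ, ∃ n, convPow μ n {g} ≠ 0)
    (hstat : Measure.sum (fun g : Γ => μ {g} • ν.map (fun x => g • x)) = ν)
    (A : ℕ → MeasurableSpace X) (hA : Monotone A) (hAm : ∀ i, A i ≤ mX) :
    Tendsto (fun i => furstenbergEntropy (A i) (hAm i) μ ν) atTop
      (𝓝 (furstenbergEntropy (⨆ i, A i) (iSup_le hAm) μ ν)) := by
  simp_rw [furstenbergEntropy_eq_sum _ _ hfin]
  refine tendsto_finsetSum _ fun g _ => Tendsto.const_mul _ ?_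
  obtain ⟨a, b, ha, hρ⟩ := exists_toReal_rnDeriv_map_smul_mem_Icc hmeas hgen hstat g⁻¹
  exact tendsto_integral_neg_log_toReal_rnDeriv_trim
    (map_smul_absolutelyContinuous hmeas hgen hstat g⁻¹) ha hρ A hA hAm

end FurstenbergEntropy

theorem furstenbergEntropy_iSup_general
    {Γ : Type*} [Group Γ] [Countable Γ] [MeasurableSpace Γ] [MeasurableSingletonClass Γ]
    {X : Type*} (A : ℕ → MeasurableSpace X) [mX : MeasurableSpace X]
    [MulAction Γ X] (hmeas : ∀ g : Γ, Measurable (fun x : X => g • x))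
    (μ : Measure Γ) [IsProbabilityMeasure μ]
    (hfin : {g : Γ | μ {g} ≠ 0}.Finite)
    (hgen : ∀ g : Γ, ∃ n : ℕ, convPow μ n {g} ≠ 0)
    (ν : Measure X) [IsProbabilityMeasure ν]
    (hstat : Measure.sum (fun g : Γ => μ {g} • ν.map (fun x => g • x)) = ν)
    (hmono : Monotone A) (hAm : ∀ i, A i ≤ mX) :
    Tendsto (fun i => furstenbergEntropy (A i) (hAm i) μ ν) atTop
        (𝓝 (furstenbergEntropy (⨆ i, A i) (iSup_le hAm) μ ν)) ∧
      furstenbergEntropy (⨆ i, A i) (iSup_le hAm) μ ν =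
        ⨆ i, furstenbergEntropy (A i) (hAm i) μ ν := by
  have htend := tendsto_furstenbergEntropy_iSup hmeas hfin hgen hstat A hmono hAm
  have hentropy_mono : Monotone fun i => furstenbergEntropy (A i) (hAm i) μ ν := fun _ _ hij =>
    furstenbergEntropy_mono hmeas hfin hgen hstat _ _ (hmono hij)
  exact ⟨htend, (isLUB_of_tendsto_atTop hentropy_mono htend).ciSup_eq.symm⟩

/-- Let `Γ` be a countable group, `μ` a finitely supported generating probability measure
on `Γ`, and `ν` a `μ`-stationary probability measure for a measurable `Γ`-action on a
standard probability space `(X, 𝔪)`.  Let `A 1 ⊆ A 2 ⊆ ⋯` be an increasing sequence of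
`Γ`-invariant sub-σ-algebras of `𝔪` and let `A_∞ = ⨆ i, A i` be the σ-algebra they
generate.  Then `h_μ(A_∞) = lim_i h_μ(A i) = sup_i h_μ(A i)`. -/
theorem furstenbergEntropy_iSup
    {Γ : Type*} [Group Γ] [Countable Γ] [MeasurableSpace Γ] [MeasurableSingletonClass Γ]
    {X : Type*} (A : ℕ → MeasurableSpace X) [mX : MeasurableSpace X] [StandardBorelSpace X]
    [MulAction Γ X] (hmeas : ∀ g : Γ, Measurable (fun x : X => g • x))
    (μ : Measure Γ) [IsProbabilityMeasure μ]
    (hfin : {g : Γ | μ {g} ≠ 0}.Finite)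
    (hgen : ∀ g : Γ, ∃ n : ℕ, convPow μ n {g} ≠ 0)
    (ν : Measure X) [IsProbabilityMeasure ν]
    (hstat : Measure.sum (fun g : Γ => μ {g} • ν.map (fun x => g • x)) = ν)
    (hmono : Monotone A) (hAm : ∀ i, A i ≤ mX)
    (hAinv : ∀ (i : ℕ) (g : Γ) (s : Set X),
      MeasurableSet[A i] s → MeasurableSet[A i] ((fun x => g • x) ⁻¹' s)) :
    Tendsto (fun i => furstenbergEntropy (A i) (hAm i) μ ν) atTop
        (𝓝 (furstenbergEntropy (⨆ i, A i) (iSup_le hAm) μ ν)) ∧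
      furstenbergEntropy (⨆ i, A i) (iSup_le hAm) μ ν =
        ⨆ i, furstenbergEntropy (A i) (hAm i) μ ν :=
  furstenbergEntropy_iSup_general A (mX := mX) hmeas μ hfin hgen ν hstat hmono hAm
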